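/- arXiv:1111.6202 — 3 statements merged into one kernel-verified Lean document; each statement's English description precedes it below -/
import Mathlib

section
/- Let G be a connected bipartite multigraph with bipartition (A,B), |A|=a, |B|=b, a ≥ b+2, at most a+b edges in total, with edges colored by [n], such that each vertex has at most d_j incident edges of color j, and suppose x ∈ A is a leaf whose unique incident edge has color j. Then there exists a vertex z ∈ A, z ≠ x, incident to strictly fewer than d_j edges of color j. -/
/-- In a connected bipartite edge-colored multigraph with parts `a ≥ b + 2`, at most
`a + b` edges, at most `d j` incident edges of color `j` at each vertex, if `x ∈ A`
is a leaf whose unique edge has color `j`, then some `z ∈ A`, `z ≠ x`, is not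
`j`-saturated. -/
theorem stmt3 {V E : Type} [Fintype V] [Fintype E] [DecidableEq V] (n : ℕ)
    (A B : Finset V) (a b : ℕ) (d : Fin n → ℕ) (hd : ∀ j, 0 < d j)
    (ends : E → V × V) (color : E → Fin n)
    (hA : A.card = a) (hB : B.card = b)
    (hdisj : Disjoint A B) (hcover : A ∪ B = Finset.univ)
    (hbip : ∀ e, (ends e).1 ∈ A ∧ (ends e).2 ∈ B)
    (hconn : ∀ v w : V, Relation.ReflTransGen
      (fun x y => ∃ e, ends e = (x, y) ∨ ends e = (y, x)) v w)
    (hab : b + 2 ≤ a)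
    (hE : Fintype.card E ≤ a + b)
    (hadm : ∀ (v : V) (j : Fin n),
      Nat.card {e : E // ((ends e).1 = v ∨ (ends e).2 = v) ∧ color e = j} ≤ d j)
    (x : V) (hx : x ∈ A) (j : Fin n)
    (hleaf : Nat.card {e : E // (ends e).1 = x ∨ (ends e).2 = x} = 1)
    (hcol : ∀ e : E, ((ends e).1 = x ∨ (ends e).2 = x) → color e = j) :
    ∃ z ∈ A, z ≠ x ∧
      Nat.card {e : E // ((ends e).1 = z ∨ (ends e).2 = z) ∧ color e = j} < d j := by
  classical
  by_contra hcon
  push_neg at hcon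
  -- key: for v ∈ A, incidence ↔ first endpoint equals v
  have hAend : ∀ (v : V), v ∈ A → ∀ e : E,
      ((ends e).1 = v ∨ (ends e).2 = v) ↔ (ends e).1 = v := by
    intro v hv e
    constructor
    · rintro (h | h)
      · exact h
      · exact absurd hv (by rw [← h]; exact Finset.disjoint_right.mp hdisj (hbip e).2)
    · exact Or.inl
  have hBend : ∀ (v : V), v ∈ B → ∀ e : E,
      ((ends e).1 = v ∨ (ends e).2 = v) ↔ (ends e).2 = v := by
    intro v hv e
    constructor
    · rintro (h | h)
      · exact absurd hv (by rw [← h]; exact Finset.disjoint_left.mp hdisj (hbip e).1)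
      · exact h
    · exact Or.inr
  have hcard : ∀ (p : E → Prop) [DecidablePred p],
      Nat.card {e : E // p e} = (Finset.univ.filter p).card := by
    intro p _
    rw [Nat.card_eq_fintype_card, Fintype.card_subtype]
  set S : Finset E := Finset.univ.filter (fun e => color e = j) with hS
  -- count by A side
  have hsumA : S.card = ∑ v ∈ A, (S.filter (fun e => (ends e).1 = v)).card := by
    apply Finset.card_eq_sum_card_fiberwise
    intro e _
    exact (hbip e).1
  have hsumB : S.card = ∑ v ∈ B, (S.filter (fun e => (ends e).2 = v)).card := by
    apply Finset.card_eq_sum_card_fiberwise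
    intro e _
    exact (hbip e).2
  -- fiber cards for A vertices equal the Nat.card quantity
  have hfibA : ∀ v ∈ A, (S.filter (fun e => (ends e).1 = v)).card
      = Nat.card {e : E // ((ends e).1 = v ∨ (ends e).2 = v) ∧ color e = j} := by
    intro v hv
    rw [hcard]
    congr 1
    ext e
    simp only [hS, Finset.mem_filter, Finset.mem_univ, true_and]
    rw [hAend v hv e]
    tauto
  have hfibB : ∀ v ∈ B, (S.filter (fun e => (ends e).2 = v)).card ≤ d j := by
    intro v hv
    calc (S.filter (fun e => (ends e).2 = v)).card
        = Nat.card {e : E // ((ends e).1 = v ∨ (ends e).2 = v) ∧ color e = j} := by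
          rw [hcard]
          congr 1
          ext e
          simp only [hS, Finset.mem_filter, Finset.mem_univ, true_and]
          rw [hBend v hv e]
          tauto
      _ ≤ d j := hadm v j
  -- upper bound
  have hupper : S.card ≤ b * d j := by
    rw [hsumB]
    calc ∑ v ∈ B, (S.filter (fun e => (ends e).2 = v)).card
        ≤ ∑ _v ∈ B, d j := Finset.sum_le_sum hfibB
      _ = b * d j := by rw [Finset.sum_const, hB, smul_eq_mul]
  -- lower bound: x has at least one incident edge, colored j
  have hxfib : 1 ≤ (S.filter (fun e => (ends e).1 = x)).card := by
    have : Nat.card {e : E // (ends e).1 = x ∨ (ends e).2 = x} = 1 := hleaf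
    rw [hcard] at this
    obtain ⟨e, he⟩ := Finset.card_pos.mp (by omega : 0 < (Finset.univ.filter
        (fun e => (ends e).1 = x ∨ (ends e).2 = x)).card)
    simp only [Finset.mem_filter, Finset.mem_univ, true_and] at he
    apply Finset.card_pos.mpr
    refine ⟨e, ?_⟩
    simp only [hS, Finset.mem_filter, Finset.mem_univ, true_and]
    exact ⟨hcol e he, (hAend x hx e).mp he⟩
  have hothers : ∀ v ∈ A.erase x, d j ≤ (S.filter (fun e => (ends e).1 = v)).card := by
    intro v hv
    obtain ⟨hvx, hvA⟩ := Finset.mem_erase.mp hv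
    rw [hfibA v hvA]
    exact hcon v hvA hvx
  have hlower : (a - 1) * d j + 1 ≤ S.card := by
    rw [hsumA, ← Finset.add_sum_erase A _ hx]
    have h1 : (a - 1) * d j ≤ ∑ v ∈ A.erase x, (S.filter (fun e => (ends e).1 = v)).card := by
      calc (a - 1) * d j = ∑ _v ∈ A.erase x, d j := by
            rw [Finset.sum_const, Finset.card_erase_of_mem hx, hA, smul_eq_mul]
        _ ≤ _ := Finset.sum_le_sum hothers
    omega
  have hdj := hd j
  have ha1 : b + 1 ≤ a - 1 := by omega
  nlinarith [Nat.mul_le_mul_right (d j) ha1]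
end

section
/- Let r ≥ 1 and let d = (d_1,…,d_n) be positive integers. Let λ = (λ^1,…,λ^n) be an n-tuple of partitions with λ^j ⊢ r·d_j and each λ^j having at most two parts. Set e = λ^1_2 + … + λ^n_2 and f = max_j ⌈λ^j_2 / d_j⌉. If e < 2f − 1, then there is no admissible graph of shape λ, i.e., no multigraph on r vertices with exactly λ^j_2 edges of color j for each j, each vertex having at most d_j incident edges of color j, whose underlying graph is a tree plus isolated vertices or is connected bipartite. -/
open SimpleGraph

/-- In a connected graph, every non-root vertex has a neighbor strictly closer to the root. -/
lemma aux_parent {V : Type} (G : SimpleGraph V) (hc : G.Connected) (root v : V)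
    (hv : v ≠ root) : ∃ u, G.Adj u v ∧ G.dist root u + 1 = G.dist root v := by
  obtain ⟨w, hw⟩ := hc.exists_walk_length_eq_dist v root
  cases w with
  | nil => exact absurd rfl hv
  | @cons _ u _ h q =>
    refine ⟨u, h.symm, ?_⟩
    have h1 : G.dist root u ≤ q.length := by
      simpa using G.dist_le q.reverse
    have h2 : G.dist root v ≤ G.dist root u + G.dist u v := hc.dist_triangle
    have h3 : G.dist u v = 1 := dist_eq_one_iff_adj.mpr h.symm
    have h4 : q.length + 1 = G.dist v root := by simpa using hw
    have h5 : G.dist v root = G.dist root v := dist_comm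
    omega

/-- A connected graph on a finite vertex type has at least `card V - 1` edges. -/
lemma aux_conn_card {V : Type} [Fintype V] [DecidableEq V] (G : SimpleGraph V)
    [Fintype G.edgeSet] (hc : G.Connected) :
    Fintype.card V ≤ Fintype.card G.edgeSet + 1 := by
  classical
  have hne : Nonempty V := hc.nonempty
  obtain ⟨root⟩ := hne
  have H : ∀ v : {v : V // v ≠ root}, ∃ u, G.Adj u v.1 ∧
      G.dist root u + 1 = G.dist root v.1 := fun v => aux_parent G hc root v.1 v.2
  choose u hadj hdist using H
  set φ : {v : V // v ≠ root} → G.edgeSet := fun v => ⟨s(u v, v.1), hadj v⟩ with hφ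
  have hinj : Function.Injective φ := by
    intro a b hab
    have : s(u a, a.1) = s(u b, b.1) := congrArg Subtype.val hab
    rw [Sym2.eq_iff] at this
    rcases this with ⟨_, h2⟩ | ⟨h1, h2⟩
    · exact Subtype.ext h2
    · exfalso
      have da := hdist a
      have db := hdist b
      rw [h1] at da; rw [← h2] at db
      omega
  have := Fintype.card_le_of_injective φ hinj
  have hcv : Fintype.card {v : V // v ≠ root} = Fintype.card V - 1 := by
    rw [Fintype.card_subtype_compl, Fintype.card_subtype_eq]
  have : 0 < Fintype.card V := Fintype.card_pos_iff.mpr ⟨root⟩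
  omega

/-- A connected graph with at most `card V - 1` edges admits a proper 2-coloring. -/
lemma aux_two_coloring {V : Type} [Fintype V] [DecidableEq V] (G : SimpleGraph V)
    [Fintype G.edgeSet] (hc : G.Connected)
    (hcard : Fintype.card G.edgeSet + 1 ≤ Fintype.card V) :
    ∃ side : V → Bool, ∀ x y, G.Adj x y → side x ≠ side y := by
  classical
  have hne : Nonempty V := hc.nonempty
  obtain ⟨root⟩ := hne
  have H : ∀ v : {v : V // v ≠ root}, ∃ u, G.Adj u v.1 ∧
      G.dist root u + 1 = G.dist root v.1 := fun v => aux_parent G hc root v.1 v.2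
  choose u hadj hdist using H
  set φ : {v : V // v ≠ root} → G.edgeSet := fun v => ⟨s(u v, v.1), hadj v⟩ with hφ
  have hinj : Function.Injective φ := by
    intro a b hab
    have : s(u a, a.1) = s(u b, b.1) := congrArg Subtype.val hab
    rw [Sym2.eq_iff] at this
    rcases this with ⟨_, h2⟩ | ⟨h1, h2⟩
    · exact Subtype.ext h2
    · exfalso
      have da := hdist a
      have db := hdist b
      rw [h1] at da; rw [← h2] at db
      omega
  have hcv : Fintype.card {v : V // v ≠ root} = Fintype.card V - 1 := by
    rw [Fintype.card_subtype_compl, Fintype.card_subtype_eq]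
  have hpos : 0 < Fintype.card V := Fintype.card_pos_iff.mpr ⟨root⟩
  have hle := Fintype.card_le_of_injective φ hinj
  have hbij : Function.Bijective φ :=
    (Fintype.bijective_iff_injective_and_card φ).mpr ⟨hinj, by omega⟩
  refine ⟨fun v => (G.dist root v).bodd, ?_⟩
  intro x y hxy
  obtain ⟨a, ha⟩ := hbij.2 ⟨s(x, y), hxy⟩
  have : s(u a, a.1) = s(x, y) := congrArg Subtype.val ha
  rw [Sym2.eq_iff] at this
  have da := hdist a
  rcases this with ⟨h1, h2⟩ | ⟨h1, h2⟩ <;> subst h1 <;> subst h2 <;>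
    · beta_reduce; rw [← da]; simp [Nat.bodd_succ]

/-- Counting: each color-`j` edge has exactly one endpoint on each side of a proper
2-coloring; vertices absorb at most `dj` edges of color `j`. -/
lemma aux_count {n r : ℕ} {E : Type} [Fintype E] (ends : E → Sym2 (Fin r)) (c : E → Fin n)
    (j : Fin n) (lamj dj : ℕ) (hcount : Nat.card {e' : E // c e' = j} = lamj)
    (hdeg : ∀ v : Fin r, Nat.card {e' : E // c e' = j ∧ v ∈ ends e'} ≤ dj)
    (side : Fin r → Bool)
    (hside : ∀ (e' : E) (x y : Fin r), ends e' = s(x, y) → side x ≠ side y) (b : Bool) :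
    lamj ≤ dj * (Finset.univ.filter (fun v => side v = b ∧ ∃ e', v ∈ ends e')).card := by
  classical
  set θ : E → Fin r := fun e' =>
    if side (ends e').out.1 = b then (ends e').out.1 else (ends e').out.2 with hθ
  have hmk : ∀ e' : E, ends e' = s((ends e').out.1, (ends e').out.2) := by
    intro e'
    conv_lhs => rw [← (ends e').out_eq]
  have hmem : ∀ e' : E, θ e' ∈ ends e' := by
    intro e'
    by_cases h : side (ends e').out.1 = b
    · simp only [hθ, if_pos h]; exact (ends e').out_fst_mem
    · simp only [hθ, if_neg h]; exact (ends e').out_snd_mem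
  have hsb : ∀ e' : E, side (θ e') = b := by
    intro e'
    have := hside e' _ _ (hmk e')
    by_cases h : side (ends e').out.1 = b
    · simpa [hθ, if_pos h] using h
    · simp only [hθ, if_neg h]
      revert this h
      cases side (ends e').out.1 <;> cases side (ends e').out.2 <;> cases b <;> simp
  set S : Finset E := Finset.univ.filter (fun e' => c e' = j) with hS
  have hScard : S.card = lamj := by
    rw [← hcount, Nat.card_eq_fintype_card, Fintype.card_subtype]
  rw [← hScard]
  refine Finset.card_le_mul_card_image_of_maps_to (f := θ) ?_ dj ?_
  · intro e' he'
    simp only [Finset.mem_filter, Finset.mem_univ, true_and]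
    exact ⟨hsb e', e', hmem e'⟩
  · intro v _
    have h1 : (S.filter (fun e' => θ e' = v)) ⊆
        Finset.univ.filter (fun e' => c e' = j ∧ v ∈ ends e') := by
      intro e' he'
      simp only [hS, Finset.mem_filter, Finset.mem_univ, true_and] at he' ⊢
      exact ⟨he'.1, he'.2 ▸ hmem e'⟩
    calc (S.filter (fun e' => θ e' = v)).card
        ≤ (Finset.univ.filter (fun e' => c e' = j ∧ v ∈ ends e')).card :=
          Finset.card_le_card h1
      _ = Nat.card {e' : E // c e' = j ∧ v ∈ ends e'} := by
          rw [Nat.card_eq_fintype_card, Fintype.card_subtype]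
      _ ≤ dj := hdeg v

/-- If `e_λ < 2 f_λ - 1` (i.e. `e + 1 < 2f`), there is no admissible graph of shape
`λ` (a multigraph on `r` vertices with `λ²ⱼ` edges of color `j`, each vertex having at
most `dⱼ` incident edges of color `j`) which is connected bipartite, or a tree plus
isolated vertices. -/
theorem stmt4 (n r : ℕ) (hr : 1 ≤ r) (d : Fin n → ℕ) (hd : ∀ j, 0 < d j)
    (lam1 lam2 : Fin n → ℕ)
    (hpart : ∀ j, lam1 j + lam2 j = r * d j) (h2 : ∀ j, lam2 j ≤ lam1 j)
    (e f : ℕ) (he : e = ∑ j, lam2 j)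
    (hf : f = Finset.univ.sup (fun j => (lam2 j + d j - 1) / d j))
    (hlt : e + 1 < 2 * f) :
    ¬ ∃ (E : Type) (_ : Fintype E) (ends : E → Sym2 (Fin r)) (c : E → Fin n),
      (∀ j, Nat.card {e' : E // c e' = j} = lam2 j) ∧
      (∀ (v : Fin r) (j : Fin n),
        Nat.card {e' : E // c e' = j ∧ v ∈ ends e'} ≤ d j) ∧
      (((∀ v w : Fin r,
          Relation.ReflTransGen (fun x y => ∃ e', ends e' = s(x, y)) v w) ∧
        (∃ side : Fin r → Bool,
          ∀ (e' : E) (x y : Fin r), ends e' = s(x, y) → side x ≠ side y)) ∨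
       (IsEmpty E ∨
        ((∀ v w : Fin r, (∃ e', v ∈ ends e') → (∃ e', w ∈ ends e') →
            Relation.ReflTransGen (fun x y => ∃ e', ends e' = s(x, y)) v w) ∧
          Nat.card {v : Fin r // ∃ e', v ∈ ends e'} = Fintype.card E + 1))) := by
  classical
  rintro ⟨E, _inst, ends, c, hcount, hdeg, hcase⟩
  -- total number of edges
  have hE : Fintype.card E = e := by
    rw [he]
    calc Fintype.card E = (Finset.univ : Finset E).card := Finset.card_univ.symm
      _ = ∑ j, (Finset.univ.filter (fun e' => c e' = j)).card :=
        Finset.card_eq_sum_card_fiberwise (fun x _ => Finset.mem_univ (c x))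
      _ = ∑ j, lam2 j := by
        refine Finset.sum_congr rfl fun j _ => ?_
        rw [← hcount j, Nat.card_eq_fintype_card, Fintype.card_subtype]
  have hf1 : 1 ≤ f := by omega
  have hn : (Finset.univ : Finset (Fin n)).Nonempty := by
    rcases (Finset.univ : Finset (Fin n)).eq_empty_or_nonempty with h | h
    · rw [hf, h, Finset.sup_empty] at hf1; simp at hf1
    · exact h
  obtain ⟨j, -, hj⟩ :=
    Finset.exists_mem_eq_sup Finset.univ hn (fun j => (lam2 j + d j - 1) / d j)
  rw [← hf] at hj
  -- key counting consequence of a proper 2-coloring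
  have key : ∀ (side : Fin r → Bool),
      (∀ (e' : E) (x y : Fin r), ends e' = s(x, y) → side x ≠ side y) →
      2 * f ≤ (Finset.univ.filter (fun v : Fin r => ∃ e', v ∈ ends e')).card := by
    intro side hside
    have hb : ∀ b : Bool,
        f ≤ (Finset.univ.filter (fun v => side v = b ∧ ∃ e', v ∈ ends e')).card := by
      intro b
      have ht := aux_count ends c j _ _ (hcount j) (fun v => hdeg v j) side hside b
      rw [hj, Nat.div_le_iff_le_mul_add_pred (hd j)]
      have := hd j
      omega
    have h1 := hb true
    have h2 := hb false
    have hdisj : Disjoint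
        (Finset.univ.filter (fun v => side v = true ∧ ∃ e', v ∈ ends e'))
        (Finset.univ.filter (fun v => side v = false ∧ ∃ e', v ∈ ends e')) := by
      rw [Finset.disjoint_left]
      intro v hv1 hv2
      simp only [Finset.mem_filter] at hv1 hv2
      rw [hv1.2.1] at hv2; simp at hv2
    have hsub : (Finset.univ.filter (fun v => side v = true ∧ ∃ e', v ∈ ends e')) ∪
        (Finset.univ.filter (fun v => side v = false ∧ ∃ e', v ∈ ends e')) ⊆
        Finset.univ.filter (fun v : Fin r => ∃ e', v ∈ ends e') := by
      intro v hv
      simp only [Finset.mem_union, Finset.mem_filter] at hv ⊢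
      rcases hv with h | h <;> exact ⟨h.1, h.2.2⟩
    have := Finset.card_le_card hsub
    rw [Finset.card_union_of_disjoint hdisj] at this
    omega
  rcases hcase with ⟨hconn, side, hside⟩ | hempty | ⟨hconn, hcard⟩
  · -- connected bipartite case
    have h2f := key side hside
    set GB : SimpleGraph (Fin r) :=
      { Adj := fun x y => x ≠ y ∧ ∃ e', ends e' = s(x, y)
        symm := ⟨by
          rintro x y ⟨hne, e', hxy⟩
          exact ⟨hne.symm, e', by rw [hxy, Sym2.eq_swap]⟩⟩
        loopless := ⟨fun x h => h.1 rfl⟩ } with hGB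
    have hreach : ∀ v w : Fin r,
        Relation.ReflTransGen (fun x y => ∃ e', ends e' = s(x, y)) v w →
        GB.Reachable v w := by
      intro v w h
      induction h with
      | refl => exact SimpleGraph.Reachable.refl _
      | @tail b cc hvb hbc ih =>
        obtain ⟨e', he'⟩ := hbc
        by_cases hb : b = cc
        · exact hb ▸ ih
        · exact ih.trans (SimpleGraph.Adj.reachable ⟨hb, e', he'⟩)
    haveI : Nonempty (Fin r) := ⟨⟨0, hr⟩⟩
    have hGBconn : GB.Connected := SimpleGraph.Connected.mk fun v w => hreach v w (hconn v w)
    haveI : Fintype ↥GB.edgeSet := Fintype.ofFinite _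
    have hψ : ∀ q : Sym2 (Fin r), q ∈ GB.edgeSet → ∃ e', ends e' = q := by
      intro q
      induction q using Sym2.ind with
      | _ a b =>
        intro hq
        rw [SimpleGraph.mem_edgeSet] at hq
        exact hq.2
    choose ψ hψ' using fun q : GB.edgeSet => hψ q.1 q.2
    have hinjψ : Function.Injective ψ := by
      intro q1 q2 h
      apply Subtype.ext
      rw [← hψ' q1, ← hψ' q2, h]
    have hleψ : Fintype.card ↥GB.edgeSet ≤ Fintype.card E :=
      Fintype.card_le_of_injective ψ hinjψ
    have hge : Fintype.card (Fin r) ≤ Fintype.card ↥GB.edgeSet + 1 :=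
      aux_conn_card GB hGBconn
    have htc : (Finset.univ.filter (fun v : Fin r => ∃ e', v ∈ ends e')).card ≤
        Fintype.card (Fin r) := by
      have h1 := Finset.card_filter_le (Finset.univ : Finset (Fin r))
        (fun v : Fin r => ∃ e', v ∈ ends e')
      rwa [Finset.card_univ] at h1
    have hchain : 2 * f ≤ e + 1 := by
      calc 2 * f ≤ (Finset.univ.filter (fun v : Fin r => ∃ e', v ∈ ends e')).card := h2f
        _ ≤ Fintype.card (Fin r) := htc
        _ ≤ Fintype.card ↥GB.edgeSet + 1 := hge
        _ ≤ Fintype.card E + 1 := by omega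
        _ = e + 1 := by rw [hE]
    omega
  · -- empty case
    have hzero : ∀ j, lam2 j = 0 := by
      intro j
      rw [← hcount j, Nat.card_eq_fintype_card, Fintype.card_eq_zero_iff]
      exact ⟨fun x => hempty.elim x.1⟩
    have : f = 0 := by
      rw [hf]
      refine Nat.le_antisymm (Finset.sup_le fun j _ => ?_) (Nat.zero_le _)
      rw [hzero j, Nat.zero_add]
      exact Nat.le_of_eq (Nat.div_eq_of_lt (by have := hd j; omega))
    omega
  · -- tree case
    set S := {v : Fin r // ∃ e', v ∈ ends e'} with hSdef
    have hcS : Fintype.card S = Fintype.card E + 1 := by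
      rw [← Nat.card_eq_fintype_card]; exact hcard
    haveI : Nonempty S := Fintype.card_pos_iff.mp (by omega)
    set GT : SimpleGraph S :=
      { Adj := fun a b => a.1 ≠ b.1 ∧ ∃ e', ends e' = s(a.1, b.1)
        symm := ⟨by
          rintro a b ⟨hne, e', hxy⟩
          exact ⟨hne.symm, e', by rw [hxy, Sym2.eq_swap]⟩⟩
        loopless := ⟨fun x h => h.1 rfl⟩ } with hGT
    have hreach : ∀ v w : Fin r,
        Relation.ReflTransGen (fun x y => ∃ e', ends e' = s(x, y)) v w →
        ∀ (hv : ∃ e', v ∈ ends e') (hw : ∃ e', w ∈ ends e'),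
        GT.Reachable ⟨v, hv⟩ ⟨w, hw⟩ := by
      intro v w h
      induction h with
      | refl => intro hv hw; exact SimpleGraph.Reachable.refl _
      | @tail b cc hvb hbc ih =>
        intro hv hw
        obtain ⟨e', he'⟩ := hbc
        have hbt : ∃ e'', b ∈ ends e'' := ⟨e', by rw [he']; exact Sym2.mem_mk_left b cc⟩
        by_cases hb : b = cc
        · subst hb; exact ih hv hw
        · exact (ih hv hbt).trans
            (SimpleGraph.Adj.reachable (⟨hb, e', he'⟩ : GT.Adj ⟨b, hbt⟩ ⟨cc, hw⟩))
    have hGTconn : GT.Connected :=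
      SimpleGraph.Connected.mk fun a b => hreach a.1 b.1 (hconn a.1 b.1 a.2 b.2) a.2 b.2
    haveI : Fintype ↥GT.edgeSet := Fintype.ofFinite _
    have hψ : ∀ q : Sym2 S, q ∈ GT.edgeSet → ∃ e', ends e' = Sym2.map Subtype.val q := by
      intro q
      induction q using Sym2.ind with
      | _ a b =>
        intro hq
        rw [SimpleGraph.mem_edgeSet] at hq
        obtain ⟨e', he'⟩ := hq.2
        exact ⟨e', by rw [Sym2.map_pair_eq]; exact he'⟩
    choose ψ hψ' using fun q : GT.edgeSet => hψ q.1 q.2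
    have hinjψ : Function.Injective ψ := by
      intro q1 q2 h
      apply Subtype.ext
      apply Sym2.map.injective Subtype.val_injective
      rw [← hψ' q1, ← hψ' q2, h]
    have hleψ : Fintype.card ↥GT.edgeSet ≤ Fintype.card E :=
      Fintype.card_le_of_injective ψ hinjψ
    have hge : Fintype.card S ≤ Fintype.card ↥GT.edgeSet + 1 :=
      aux_conn_card GT hGTconn
    have hbijψ : Function.Bijective ψ :=
      (Fintype.bijective_iff_injective_and_card ψ).mpr ⟨hinjψ, by omega⟩
    obtain ⟨sideS, hsideS⟩ := aux_two_coloring GT hGTconn (by omega)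
    set side : Fin r → Bool :=
      fun v => if h : ∃ e', v ∈ ends e' then sideS ⟨v, h⟩ else true with hsidedef
    have hsv : ∀ (v : Fin r) (hv : ∃ e', v ∈ ends e'), side v = sideS ⟨v, hv⟩ := by
      intro v hv
      simp only [hsidedef, dif_pos hv]
    have hside : ∀ (e' : E) (x y : Fin r), ends e' = s(x, y) → side x ≠ side y := by
      intro e' x y hxy
      obtain ⟨q, hq⟩ := hbijψ.2 e'
      have hq' : ends e' = Sym2.map Subtype.val q.1 := by rw [← hq]; exact hψ' q
      obtain ⟨qv, hqv⟩ := q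
      have hout : qv = s(qv.out.1, qv.out.2) := by
        conv_lhs => rw [← qv.out_eq]
      set a := qv.out.1 with ha
      set b := qv.out.2 with hb
      have hadj : GT.Adj a b := by
        rw [hout] at hqv; exact (SimpleGraph.mem_edgeSet GT).mp hqv
      have hab : sideS a ≠ sideS b := hsideS a b hadj
      have hmap : ends e' = s(a.1, b.1) := by
        simp only at hq'
        rw [hq', hout, Sym2.map_pair_eq]
      rw [hxy] at hmap
      rw [Sym2.eq_iff] at hmap
      rcases hmap with ⟨h1, h2⟩ | ⟨h1, h2⟩
      · subst h1; subst h2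
        rw [hsv _ a.2, hsv _ b.2]
        exact hab
      · subst h1; subst h2
        rw [hsv _ b.2, hsv _ a.2]
        exact hab.symm
    have h2f := key side hside
    have htc : (Finset.univ.filter (fun v : Fin r => ∃ e', v ∈ ends e')).card =
        Fintype.card S := (Fintype.card_subtype _).symm
    omega
end

section
/- Let r ≥ 1, d = (d_1,…,d_n), and λ an n-tuple of two-row partitions with λ^j ⊢ r·d_j. Set e = Σ_j λ^j_2 and f = max_j ⌈λ^j_2/d_j⌉, and assume 2f ≤ e ≤ r. Let m = ⌊e/2⌋. Then the assignment of entries given by listing columns of size two as pairs {1,2},{3,4},…,{2m−1,2m},{1,2},{3,4},…,{2m−1,2m}, followed by {1,2m+1} if e is odd, distributed left-to-right across the tableaux T^1,…,T^n (with λ^j_2 columns of size two in T^j), yields a valid Young tableau: no entry i ∈ [r] appears more than d_j times among the size-two columns of T^j. -/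
/-- Lemma 5.3 validity check: with `e = Σⱼ λ²ⱼ` size-two columns filled (left to right)
by the pairs `{1,2},…,{2m-1,2m},{1,2},…,{2m-1,2m}` (and `{1,2m+1}` if `e` is odd),
where `Tʲ` receives `λ²ⱼ` consecutive columns, no entry `i ∈ [r]` appears more than
`dⱼ` times among the size-two columns of `Tʲ`, provided `2 maxⱼ⌈λ²ⱼ/dⱼ⌉ ≤ e ≤ r`. -/
theorem stmt5 (n r : ℕ) (hr : 1 ≤ r) (d : Fin n → ℕ) (hd : ∀ j, 0 < d j)
    (lam1 lam2 : Fin n → ℕ)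
    (hpart : ∀ j, lam1 j + lam2 j = r * d j) (h2 : ∀ j, lam2 j ≤ lam1 j)
    (e m : ℕ) (he : e = ∑ j, lam2 j) (hm : m = e / 2)
    (hfe : 2 * Finset.univ.sup (fun j => (lam2 j + d j - 1) / d j) ≤ e)
    (her : e ≤ r)
    (col : ℕ → Finset ℕ)
    (hcol : ∀ t, col t = if t < m then {2 * t + 1, 2 * t + 2}
      else if t < 2 * m then {2 * (t - m) + 1, 2 * (t - m) + 2}
      else {1, 2 * m + 1})
    (off : Fin n → ℕ)
    (hoff : ∀ j, off j = ∑ k ∈ Finset.univ.filter (fun k => k < j), lam2 k) :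
    ∀ (j : Fin n) (i : ℕ), 1 ≤ i → i ≤ r →
      ((Finset.Ico (off j) (off j + lam2 j)).filter (fun t => i ∈ col t)).card
        ≤ d j := by
  intro j i hi1 hir
  have hdj := hd j
  -- ceiling bound: lam2 j ≤ d j * m
  have hsup : (lam2 j + d j - 1) / d j ≤ Finset.univ.sup (fun j => (lam2 j + d j - 1) / d j) :=
    Finset.le_sup (f := fun j => (lam2 j + d j - 1) / d j) (Finset.mem_univ j)
  have hq : (lam2 j + d j - 1) / d j ≤ m := by omega
  have hdm : lam2 j ≤ d j * m := by
    have h1 := Nat.div_add_mod (lam2 j + d j - 1) (d j)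
    have h2 := Nat.mod_lt (lam2 j + d j - 1) hdj
    have h3 := Nat.mul_le_mul_left (d j) hq
    omega
  -- interval fits inside [0, e)
  have hrange : off j + lam2 j ≤ e := by
    have hnotin : j ∉ Finset.univ.filter (fun k => k < j) := by simp
    have hsub : insert j (Finset.univ.filter (fun k => k < j)) ⊆ Finset.univ :=
      Finset.subset_univ _
    have hle := Finset.sum_le_sum_of_subset (f := lam2) hsub
    rw [Finset.sum_insert hnotin] at hle
    rw [hoff j, he]
    omega
  set F := (Finset.Ico (off j) (off j + lam2 j)).filter (fun t => i ∈ col t) with hF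
  have hwin : ∀ t ∈ F, off j ≤ t ∧ t < off j + lam2 j := by
    intro t ht
    have := (Finset.mem_filter.mp ht).1
    exact Finset.mem_Ico.mp this
  have hchar : ∀ t ∈ F,
      (t = (i - 1) / 2 ∧ t < m ∧ i ≤ 2 * m) ∨
      (t = (i - 1) / 2 + m ∧ (i - 1) / 2 < m ∧ i ≤ 2 * m) ∨
      (t = 2 * m ∧ (i = 1 ∨ i = 2 * m + 1)) := by
    intro t ht
    obtain ⟨htI, hti⟩ := Finset.mem_filter.mp ht
    obtain ⟨hta, htb⟩ := Finset.mem_Ico.mp htI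
    rw [hcol] at hti
    split_ifs at hti with h1 h2
    · simp only [Finset.mem_insert, Finset.mem_singleton] at hti
      left; omega
    · simp only [Finset.mem_insert, Finset.mem_singleton] at hti
      right; left; omega
    · simp only [Finset.mem_insert, Finset.mem_singleton] at hti
      right; right
      constructor
      · omega
      · omega
  have hsubF : F ⊆ ({(i - 1) / 2, (i - 1) / 2 + m, 2 * m} : Finset ℕ) := by
    intro t ht
    have := hchar t ht
    simp only [Finset.mem_insert, Finset.mem_singleton]
    omega
  have hcard3 : F.card ≤ 3 := by
    refine (Finset.card_le_card hsubF).trans ?_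
    refine (Finset.card_insert_le _ _).trans ?_
    have h := Finset.card_insert_le ((i - 1) / 2 + m) ({2 * m} : Finset ℕ)
    simp only [Finset.card_singleton] at h
    omega
  by_contra hcon
  push_neg at hcon
  have hd2 : d j ≤ 2 := by omega
  rcases Nat.lt_or_ge (d j) 2 with hd1 | hd2'
  · -- d j = 1
    have hdj1 : d j = 1 := by omega
    have hLm : lam2 j ≤ m := by rw [hdj1] at hdm; omega
    have h2c : 1 < F.card := by omega
    obtain ⟨t1, ht1, t2, ht2, hne⟩ := Finset.one_lt_card.mp h2c
    have hc1 := hchar t1 ht1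
    have hc2 := hchar t2 ht2
    have hw1 := hwin t1 ht1
    have hw2 := hwin t2 ht2
    rcases hc1 with ⟨h, h', h''⟩ | ⟨h, h', h''⟩ | ⟨h, h'⟩ <;>
      rcases hc2 with ⟨g, g', g''⟩ | ⟨g, g', g''⟩ | ⟨g, g'⟩ <;> omega
  · -- d j = 2
    have hdj2 : d j = 2 := by omega
    have hLm : lam2 j ≤ 2 * m := by rw [hdj2] at hdm; omega
    have h3c : 2 < F.card := by omega
    obtain ⟨t1, ht1, t2, ht2, t3, ht3, h12, h13, h23⟩ := Finset.two_lt_card.mp h3c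
    have hc1 := hchar t1 ht1
    have hc2 := hchar t2 ht2
    have hc3 := hchar t3 ht3
    have hw1 := hwin t1 ht1
    have hw2 := hwin t2 ht2
    have hw3 := hwin t3 ht3
    rcases hc1 with ⟨h, h', h''⟩ | ⟨h, h', h''⟩ | ⟨h, h'⟩ <;>
      rcases hc2 with ⟨g, g', g''⟩ | ⟨g, g', g''⟩ | ⟨g, g'⟩ <;>
      rcases hc3 with ⟨f, f', f''⟩ | ⟨f, f', f''⟩ | ⟨f, f'⟩ <;> omega
end
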